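/- Let X ⊆ ℕ, let μ* be an upper density on ℕ, and let (k_n)_{n ≥ 1} be a sequence of pairwise coprime positive integers with ∑_{n ≥ 1} 1/k_n = ∞. For each n ≥ 1 set X_n := {x ∈ X : k_n divides x}. If μ*(X_n) > 0 for only finitely many n, then μ*(X) = 0. In particular, the set {k_n : n ≥ 1} is small. -/

import Mathlib

open Set Filter Topology

/-- An upper quasi-density on ℕ. -/
def IsUpperQuasiDensity (μ : Set ℕ → ℝ) : Prop :=
  μ Set.univ = 1 ∧
  (∀ X : Set ℕ, μ X ≤ 1) ∧
  (∀ X Y : Set ℕ, μ (X ∪ Y) ≤ μ X + μ Y) ∧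
  (∀ (X : Set ℕ) (k : ℕ), 0 < k → μ ((fun x => k * x) '' X) = μ X / k) ∧
  (∀ (X : Set ℕ) (h : ℕ), μ ((fun x => x + h) '' X) = μ X)

/-- An upper density on ℕ: a monotone upper quasi-density. -/
def IsUpperDensity (μ : Set ℕ → ℝ) : Prop :=
  IsUpperQuasiDensity μ ∧ ∀ X Y : Set ℕ, X ⊆ Y → μ X ≤ μ Y

/-- A set of naturals is small if every upper quasi-density vanishes on it. -/
def SmallSet (X : Set ℕ) : Prop :=
  ∀ μ : Set ℕ → ℝ, IsUpperQuasiDensity μ → μ X = 0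

/-- The upper asymptotic density of a set of naturals. -/
noncomputable def upperAsymptoticDensity (X : Set ℕ) : ℝ :=
  limsup (fun n : ℕ => ((X ∩ Set.Icc 1 n).ncard : ℝ) / n) atTop

/-- The arithmetic progression k·ℕ + h. -/
def AP (k h : ℕ) : Set ℕ := {x : ℕ | ∃ m : ℕ, x = k * m + h}

/-- A finite union of arithmetic progressions of ℕ. -/
def IsFinUnionAP (A : Set ℕ) : Prop :=
  ∃ s : Finset (ℕ × ℕ), (∀ p ∈ s, 0 < p.1) ∧ A = ⋃ p ∈ s, AP p.1 p.2

/-- The upper Buck density of a set of naturals. -/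
noncomputable def buckDensity (X : Set ℕ) : ℝ :=
  sInf {d : ℝ | ∃ A : Set ℕ, IsFinUnionAP A ∧ X ⊆ A ∧ d = upperAsymptoticDensity A}

/-- `rk k X` is the number of residues h ∈ [0, k-1] with X ∩ (k·ℕ + h) ≠ ∅. -/
noncomputable def rk (k : ℕ) (X : Set ℕ) : ℕ :=
  {h : ℕ | h < k ∧ (X ∩ AP k h).Nonempty}.ncard

/-- `wk μ k S` is the number of residues h ∈ [0, k-1] with μ(S ∩ (k·ℕ + h)) ≠ 0. -/
noncomputable def wk (μ : Set ℕ → ℝ) (k : ℕ) (S : Set ℕ) : ℕ :=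
  {h : ℕ | h < k ∧ μ (S ∩ AP k h) ≠ 0}.ncard


/-!
A sieve. For pairwise coprime `k₁, …, k_N` with product `K`, split `X` along the residue
classes modulo `K`. Translation and dilation invariance give each class upper quasi-density at
most `1 / K`; a class divisible by some `kᵢ` lies in `Xᵢ`, which is null, and by the Chinese
remainder theorem at most `∏ (kᵢ - 1)` classes remain. Hence
`μ* X ≤ ∏ (1 - 1 / kᵢ) ≤ exp (-∑ 1 / kᵢ)`, which is arbitrarily small.
For the smallness of `{kₙ}` sieve by the primes instead: a prime divides at most one `kₙ`, so
each class divisible by a prime meets `{kₙ}` in at most one point, and finite sets are null for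
every upper quasi-density, monotone or not.
-/

open scoped Function

theorem Nat.modEq_prod_of_forall_modEq {ι : Type*} {T : Finset ι} {f : ι → ℕ} {a b : ℕ}
    (hcop : (T : Set ι).Pairwise (Nat.Coprime on f)) (h : ∀ i ∈ T, a ≡ b [MOD f i]) :
    a ≡ b [MOD ∏ i ∈ T, f i] := by
  refine Nat.modEq_iff_dvd.mpr ?_
  push_cast
  exact Finset.prod_dvd_of_coprime (fun i hi j hj hij => Nat.isCoprime_iff_coprime.mpr
    (hcop hi hj hij)) fun i hi => Nat.modEq_iff_dvd.mp (h i hi)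

theorem card_filter_forall_not_dvd_le {ι : Type*} (T : Finset ι) (f : ι → ℕ)
    (hf : ∀ i ∈ T, 0 < f i) (hcop : (T : Set ι).Pairwise (Nat.Coprime on f)) :
    ((Finset.range (∏ i ∈ T, f i)).filter fun h => ∀ i ∈ T, ¬ f i ∣ h).card
      ≤ ∏ i ∈ T, (f i - 1) := by
  classical
  have hcard : (T.pi fun i => (Finset.range (f i)).erase 0).card = ∏ i ∈ T, (f i - 1) := by
    rw [Finset.card_pi]
    refine Finset.prod_congr rfl fun i hi => ?_
    rw [Finset.card_erase_of_mem (Finset.mem_range.mpr (hf i hi)), Finset.card_range]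
  rw [← hcard]
  -- Chinese remainder theorem: a residue mod ∏ f i is determined by its residues mod the f i.
  refine Finset.card_le_card_of_injOn (fun h i _ => h % f i) (fun h hh => ?_) ?_
  · simp only [Finset.coe_filter, Finset.mem_range, Set.mem_ofPred_eq] at hh
    simp only [Finset.mem_coe, Finset.mem_pi, Finset.mem_erase, Finset.mem_range]
    exact fun i hi => ⟨fun h0 => hh.2 i hi (Nat.dvd_of_mod_eq_zero h0), Nat.mod_lt _ (hf i hi)⟩
  · intro h₁ hh₁ h₂ hh₂ heq
    simp only [Finset.coe_filter, Finset.mem_range, Set.mem_ofPred_eq] at hh₁ hh₂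
    exact (Nat.modEq_prod_of_forall_modEq hcop fun i hi => congrFun (congrFun heq i) hi).eq_of_lt_of_lt
      hh₁.1 hh₂.1

theorem Real.prod_one_sub_inv_le_exp_neg_sum {ι : Type*} (T : Finset ι) (f : ι → ℕ)
    (hf : ∀ i ∈ T, 0 < f i) :
    ∏ i ∈ T, (1 - 1 / (f i : ℝ)) ≤ Real.exp (-∑ i ∈ T, 1 / (f i : ℝ)) := by
  rw [← Finset.sum_neg_distrib, Real.exp_sum]
  refine Finset.prod_le_prod (fun i hi => ?_) fun i _ => Real.one_sub_le_exp_neg _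
  have : (1 : ℝ) ≤ f i := by exact_mod_cast hf i hi
  rw [sub_nonneg]
  exact div_le_one_of_le₀ this (by positivity)

theorem exists_finset_forall_lt_sum_of_not_summable {ι : Type*} {g : ι → ℝ} (hg : 0 ≤ g)
    (hs : ¬ Summable g) {p : ι → Prop} (hp : ∀ᶠ i in cofinite, p i) (M : ℝ) :
    ∃ T : Finset ι, (∀ i ∈ T, p i) ∧ M < ∑ i ∈ T, g i := by
  classical
  by_contra! hM
  set F := (Filter.eventually_cofinite.mp hp).toFinset
  refine hs (summable_of_sum_le hg (c := M + ∑ i ∈ F, g i) fun u => ?_)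
  rw [← Finset.sum_filter_add_sum_filter_not u p]
  exact add_le_add (hM _ fun i hi => (Finset.mem_filter.mp hi).2)
    (Finset.sum_le_sum_of_subset_of_nonneg
      (fun i hi => by simpa [F] using (Finset.mem_filter.mp hi).2) fun i _ _ => hg i)

namespace IsUpperQuasiDensity

variable {ν : Set ℕ → ℝ}

theorem empty (hν : IsUpperQuasiDensity ν) : ν ∅ = 0 := by
  have h := hν.2.2.2.1 ∅ 2 two_pos
  rw [image_empty] at h
  linarith

theorem nonneg (hν : IsUpperQuasiDensity ν) (A : Set ℕ) : 0 ≤ ν A := by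
  have h := hν.2.2.1 A Aᶜ
  rw [union_compl_self, hν.1] at h
  linarith [hν.2.1 Aᶜ]

theorem singleton (hν : IsUpperQuasiDensity ν) (a : ℕ) : ν {a} = 0 := by
  have h0 : ν {0} = 0 := by
    have h := hν.2.2.2.1 {0} 2 two_pos
    rw [image_singleton, mul_zero] at h
    linarith
  have h := hν.2.2.2.2 {0} a
  rwa [image_singleton, zero_add, h0] at h

theorem biUnion_le_sum {ι : Type*} (hν : IsUpperQuasiDensity ν) (s : Finset ι)
    (A : ι → Set ℕ) : ν (⋃ i ∈ s, A i) ≤ ∑ i ∈ s, ν (A i) := by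
  classical
  induction s using Finset.induction_on with
  | empty => simp [hν.empty]
  | insert a s ha ih =>
    rw [Finset.set_biUnion_insert, Finset.sum_insert ha]
    exact (hν.2.2.1 _ _).trans (by linarith)

theorem finite (hν : IsUpperQuasiDensity ν) {A : Set ℕ} (hA : A.Finite) : ν A = 0 := by
  refine le_antisymm ?_ (hν.nonneg A)
  calc ν A = ν (⋃ a ∈ hA.toFinset, {a}) := by simp
    _ ≤ ∑ a ∈ hA.toFinset, ν {a} := hν.biUnion_le_sum _ _
    _ = 0 := by simp [hν.singleton]

theorem le_inv_of_subset_AP (hν : IsUpperQuasiDensity ν) {Y : Set ℕ} {K h : ℕ} (hK : 0 < K)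
    (hY : Y ⊆ AP K h) : ν Y ≤ 1 / K := by
  set Z : Set ℕ := {m | K * m + h ∈ Y}
  have hZ : (fun x => x + h) '' ((fun x => K * x) '' Z) = Y := by
    ext x
    simp only [mem_image, mem_ofPred_eq, Z]
    constructor
    · rintro ⟨y, ⟨m, hm, rfl⟩, rfl⟩
      exact hm
    · intro hx
      obtain ⟨m, rfl⟩ := hY hx
      exact ⟨K * m, ⟨m, hx, rfl⟩, rfl⟩
  rw [← hZ, hν.2.2.2.2, hν.2.2.2.1 Z K hK]
  gcongr
  exact hν.2.1 Z

theorem le_sum_inter_AP (hν : IsUpperQuasiDensity ν) (Y : Set ℕ) {K : ℕ} (hK : 0 < K) :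
    ν Y ≤ ∑ h ∈ Finset.range K, ν (Y ∩ AP K h) := by
  calc ν Y = ν (⋃ h ∈ Finset.range K, Y ∩ AP K h) := by
        congr 1
        ext x
        simp only [mem_iUnion, mem_inter_iff, Finset.mem_range, exists_prop]
        exact ⟨fun hx => ⟨x % K, Nat.mod_lt x hK, hx, x / K, (Nat.div_add_mod x K).symm⟩,
          fun ⟨_, _, hx, _⟩ => hx⟩
    _ ≤ _ := hν.biUnion_le_sum _ _

theorem le_prod_one_sub_inv (hν : IsUpperQuasiDensity ν) {ι : Type*} (T : Finset ι)
    (f : ι → ℕ) (hf : ∀ i ∈ T, 0 < f i) (hcop : (T : Set ι).Pairwise (Nat.Coprime on f))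
    (Y : Set ℕ) (hY : ∀ i ∈ T, ∀ Z ⊆ {y ∈ Y | f i ∣ y}, ν Z ≤ 0) :
    ν Y ≤ ∏ i ∈ T, (1 - 1 / (f i : ℝ)) := by
  classical
  set K := ∏ i ∈ T, f i
  have hK : 0 < K := Finset.prod_pos hf
  have hKR : (0 : ℝ) < K := by exact_mod_cast hK
  set S := (Finset.range K).filter fun h => ∀ i ∈ T, ¬ f i ∣ h
  have hres : ∀ h, ν (Y ∩ AP K h) ≤
      if ∀ i ∈ T, ¬ f i ∣ h then 1 / (K : ℝ) else 0 := by
    intro h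
    split_ifs with hh
    · exact hν.le_inv_of_subset_AP hK inter_subset_right
    · push Not at hh
      obtain ⟨i, hi, hdvd⟩ := hh
      refine hY i hi _ ?_
      rintro _ ⟨hy, m, rfl⟩
      exact ⟨hy, dvd_add ((Finset.dvd_prod_of_mem f hi).mul_right m) hdvd⟩
  have hS : (S.card : ℝ) ≤ ∏ i ∈ T, ((f i : ℝ) - 1) := by
    have := card_filter_forall_not_dvd_le T f hf hcop
    rw [← Finset.prod_congr rfl fun i hi => Nat.cast_pred (hf i hi)]
    exact_mod_cast this
  calc ν Y ≤ ∑ h ∈ Finset.range K, ν (Y ∩ AP K h) := hν.le_sum_inter_AP Y hK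
    _ ≤ ∑ h ∈ Finset.range K, if ∀ i ∈ T, ¬ f i ∣ h then 1 / (K : ℝ) else 0 :=
        Finset.sum_le_sum fun h _ => hres h
    _ = S.card / K := by rw [Finset.sum_ite, Finset.sum_const, Finset.sum_const_zero,
        nsmul_eq_mul, add_zero, mul_one_div]
    _ ≤ (∏ i ∈ T, ((f i : ℝ) - 1)) / ∏ i ∈ T, (f i : ℝ) := by
        rw [← Nat.cast_prod]
        gcongr
    _ = ∏ i ∈ T, (1 - 1 / (f i : ℝ)) := by
        rw [← Finset.prod_div_distrib]
        refine Finset.prod_congr rfl fun i hi => ?_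
        have : (f i : ℝ) ≠ 0 := by exact_mod_cast (hf i hi).ne'
        field_simp

theorem eq_zero_of_not_summable (hν : IsUpperQuasiDensity ν) {ι : Type*} (f : ι → ℕ)
    (hf : ∀ i, 0 < f i) (hcop : Pairwise (Nat.Coprime on f))
    (hdiv : ¬ Summable fun i => 1 / (f i : ℝ)) (Y : Set ℕ)
    (hY : ∀ᶠ i in cofinite, ∀ Z ⊆ {y ∈ Y | f i ∣ y}, ν Z ≤ 0) : ν Y = 0 := by
  refine le_antisymm (ge_of_tendsto' Real.tendsto_exp_neg_atTop_nhds_zero fun M => ?_)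
    (hν.nonneg Y)
  obtain ⟨T, hT, hM⟩ :=
    exists_finset_forall_lt_sum_of_not_summable (fun i => by positivity) hdiv hY M
  calc ν Y ≤ ∏ i ∈ T, (1 - 1 / (f i : ℝ)) :=
        hν.le_prod_one_sub_inv T f (fun i _ => hf i) (hcop.set_pairwise _) Y hT
    _ ≤ Real.exp (-∑ i ∈ T, 1 / (f i : ℝ)) :=
        Real.prod_one_sub_inv_le_exp_neg_sum T f fun i _ => hf i
    _ ≤ Real.exp (-M) := Real.exp_le_exp.mpr (by linarith)

end IsUpperQuasiDensity

theorem IsUpperDensity.eq_zero_of_finite_setOf_pos {μ : Set ℕ → ℝ} (hμ : IsUpperDensity μ)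
    {ι : Type*} (k : ι → ℕ) (hpos : ∀ i, 0 < k i) (hcop : Pairwise (Nat.Coprime on k))
    (hdiv : ¬ Summable fun i => 1 / (k i : ℝ)) (X : Set ℕ)
    (hfin : {i | 0 < μ {x ∈ X | k i ∣ x}}.Finite) : μ X = 0 :=
  hμ.1.eq_zero_of_not_summable k hpos hcop hdiv X <| hfin.eventually_cofinite_notMem.mono
    fun _ hi _ hZ => (hμ.2 _ _ hZ).trans (not_lt.mp hi)

theorem subsingleton_setOf_dvd_mem_range {ι : Type*} {k : ι → ℕ}
    (hcop : Pairwise (Nat.Coprime on k)) {d : ℕ} (hd : d ≠ 1) :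
    {y ∈ range k | d ∣ y}.Subsingleton := by
  rintro _ ⟨⟨m, rfl⟩, hm⟩ _ ⟨⟨n, rfl⟩, hn⟩
  by_contra hmn
  exact hd (Nat.eq_one_of_dvd_coprimes (hcop fun h => hmn (congrArg k h)) hm hn)

theorem smallSet_range_of_pairwise_coprime {ι : Type*} {k : ι → ℕ}
    (hcop : Pairwise (Nat.Coprime on k)) : SmallSet (range k) := fun _ hν =>
  hν.eq_zero_of_not_summable ((↑) : Nat.Primes → ℕ) (fun p => p.2.pos)
    (fun p q hpq => (Nat.coprime_primes p.2 q.2).mpr (Subtype.coe_injective.ne hpq))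
    Nat.Primes.not_summable_one_div (range k) <| Eventually.of_forall fun p _ hZ =>
      (hν.finite (((subsingleton_setOf_dvd_mem_range hcop p.2.ne_one).anti hZ).finite)).le

/-- If (k_n) are pairwise coprime positive integers with ∑ 1/k_n = ∞ and
μ*({x ∈ X : k_n ∣ x}) > 0 for only finitely many n, then μ*(X) = 0; in
particular, {k_n : n} is small. -/
theorem density_zero_of_finitely_many_divisible (μ : Set ℕ → ℝ)
    (hμ : IsUpperDensity μ) (X : Set ℕ) (k : ℕ → ℕ) (hpos : ∀ n, 0 < k n)
    (hcop : ∀ m n, m ≠ n → Nat.Coprime (k m) (k n))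
    (hdiv : Tendsto (fun n : ℕ => ∑ i ∈ Finset.range n, (1 : ℝ) / (k i : ℝ))
      atTop atTop) :
    (({n : ℕ | 0 < μ {x ∈ X | k n ∣ x}}.Finite) → μ X = 0) ∧
    SmallSet (Set.range k) := by
  have hcop' : Pairwise (Nat.Coprime on k) := fun m n => hcop m n
  have hdiv' : ¬ Summable fun n => 1 / (k n : ℝ) :=
    (not_summable_iff_tendsto_nat_atTop_of_nonneg fun n => by positivity).mpr hdiv
  exact ⟨hμ.eq_zero_of_finite_setOf_pos k hpos hcop' hdiv' X,
    smallSet_range_of_pairwise_coprime hcop'⟩
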